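/- Let M_1 and M_2 be matroids on disjoint finite ground sets E_1 and E_2. Suppose P(M_1) = P(N_1) ∪ ⋯ ∪ P(N_t) is a matroid base polytope decomposition of P(M_1) into t ≥ 2 pieces, where N_1,…,N_t are matroids on E_1. For each i let L_i = N_i ⊕ M_2 be the matroid on E_1 ∪ E_2 with bases {X ∪ Y : X a base of N_i, Y a base of M_2}. Then P(M_1 ⊕ M_2) = P(L_1) ∪ ⋯ ∪ P(L_t) is a matroid base polytope decomposition of P(M_1 ⊕ M_2). -/

import Mathlib

open Matroid Set

/-- The rank of a matroid: the supremum of the cardinalities of its independent sets. -/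
noncomputable def mrk {α : Type*} (M : Matroid α) : ℕ :=
  sSup {n : ℕ | ∃ I, M.Indep I ∧ I.ncard = n}

/-- The 0/1 incidence vector of a set. -/
noncomputable def incVec {α : Type*} (B : Set α) : α → ℝ := B.indicator 1

/-- The matroid base polytope: the convex hull of the incidence vectors of the bases. -/
noncomputable def basePolytope {α : Type*} (M : Matroid α) : Set (α → ℝ) :=
  convexHull ℝ {x | ∃ B, M.IsBase B ∧ x = incVec B}

/-!
Bases of `M₁ ⊕ M₂` (and of each `Lᵢ = Nᵢ ⊕ M₂`) are disjoint unions of bases of the summands, so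
`P(M₁ ⊕ M₂) = P(M₁) + P(M₂)` and `P(Lᵢ) = P(Nᵢ) + P(M₂)` as Minkowski sums. Since the summands live
on the disjoint coordinate sets `E₁` and `E₂`, the projection onto the `E₁`-coordinates recovers
the first summand of every point; hence adding the fixed nonempty polytope `P(M₂)` commutes with
unions and intersections and preserves strict inclusions and faces.
-/

open Function Pointwise

section DisjointSupport

variable {α 𝕜 E : Type*} [AddCommMonoid E] {S T : Set α}

lemma convex_setOf_support_subset [Semiring 𝕜] [PartialOrder 𝕜] [Module 𝕜 E] (S : Set α) :
    Convex 𝕜 {x : α → E | support x ⊆ S} := by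
  intro x hx y hy a b _ _ _
  exact (support_add _ _).trans <| union_subset
    ((support_const_smul_subset a x).trans hx) ((support_const_smul_subset b y).trans hy)

lemma indicator_add_eq_left_of_support_subset (hST : Disjoint S T) {a c : α → E}
    (ha : support a ⊆ S) (hc : support c ⊆ T) : S.indicator (a + c) = a := by
  have hc₀ : S.indicator c = 0 := indicator_eq_zero'.2 (hST.symm.mono_left hc)
  change S.indicator (fun i ↦ a i + c i) = a
  rw [indicator_add, indicator_eq_self.2 ha, hc₀]
  simp

lemma eq_of_add_eq_add_of_support_subset (hST : Disjoint S T) {a a' c c' : α → E}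
    (ha : support a ⊆ S) (ha' : support a' ⊆ S) (hc : support c ⊆ T) (hc' : support c' ⊆ T)
    (h : a + c = a' + c') : a = a' := by
  rw [← indicator_add_eq_left_of_support_subset hST ha hc, h,
    indicator_add_eq_left_of_support_subset hST ha' hc']

variable {A B C : Set (α → E)}

lemma mem_of_add_mem_add_of_support_subset (hST : Disjoint S T)
    (hA : ∀ a ∈ A, support a ⊆ S) (hC : ∀ c ∈ C, support c ⊆ T) {a c : α → E}
    (ha : support a ⊆ S) (hc : c ∈ C) (hac : a + c ∈ A + C) : a ∈ A := by
  obtain ⟨a', ha', c', hc', h⟩ := hac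
  rwa [eq_of_add_eq_add_of_support_subset hST ha (hA a' ha') (hC c hc) (hC c' hc') h.symm]

lemma add_inter_add_of_support_subset (hST : Disjoint S T) (hA : ∀ a ∈ A, support a ⊆ S)
    (hB : ∀ b ∈ B, support b ⊆ S) (hC : ∀ c ∈ C, support c ⊆ T) :
    (A + C) ∩ (B + C) = A ∩ B + C := by
  refine Subset.antisymm ?_ (subset_inter (add_subset_add_right inter_subset_left)
    (add_subset_add_right inter_subset_right))
  rintro _ ⟨⟨a, ha, c, hc, rfl⟩, hB'⟩
  exact ⟨a, ⟨ha, mem_of_add_mem_add_of_support_subset hST hB hC (hA a ha) hc hB'⟩, c, hc, rfl⟩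

lemma add_ssubset_add_of_support_subset (hST : Disjoint S T) (hA : ∀ a ∈ A, support a ⊆ S)
    (hB : ∀ b ∈ B, support b ⊆ S) (hC : ∀ c ∈ C, support c ⊆ T) (hAB : A ⊂ B)
    (hCne : C.Nonempty) : A + C ⊂ B + C := by
  refine (ssubset_iff_of_subset (add_subset_add_right hAB.1)).2 ?_
  obtain ⟨b, hbB, hbA⟩ := exists_of_ssubset hAB
  obtain ⟨c, hc⟩ := hCne
  exact ⟨b + c, add_mem_add hbB hc,
    fun h ↦ hbA (mem_of_add_mem_add_of_support_subset hST hA hC (hB b hbB) hc h)⟩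

lemma IsExtreme.add_of_support_subset [Semiring 𝕜] [PartialOrder 𝕜] [Module 𝕜 E]
    (hST : Disjoint S T) (hA : ∀ a ∈ A, support a ⊆ S) (hC : ∀ c ∈ C, support c ⊆ T)
    (hAB : IsExtreme 𝕜 A B) : IsExtreme 𝕜 (A + C) (B + C) := by
  refine ⟨add_subset_add_right hAB.1, ?_⟩
  rintro _ ⟨a₁, ha₁, c₁, hc₁, rfl⟩ _ ⟨a₂, ha₂, c₂, hc₂, rfl⟩ _ ⟨b, hb, c, hc, rfl⟩
    ⟨r, s, hr, hs, hrs, hcomb⟩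
  have hproj : ∀ {a c}, a ∈ A → c ∈ C → S.indicator (a + c) = a := fun ha hc ↦
    indicator_add_eq_left_of_support_subset hST (hA _ ha) (hC _ hc)
  -- the projection onto the `S`-coordinates is linear, so `b` lies between `a₁` and `a₂`
  have hb_seg : r • a₁ + s • a₂ = b := by
    dsimp only at hcomb
    rw [← hproj ha₁ hc₁, ← hproj ha₂ hc₂, ← hproj (hAB.1 hb) hc, ← hcomb]
    ext i
    by_cases hi : i ∈ S <;> simp [hi]
  exact ⟨a₁, hAB.2 ha₁ ha₂ hb ⟨r, s, hr, hs, hrs, hb_seg⟩, c₁, hc₁, rfl⟩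

end DisjointSupport

section BasePolytope

variable {α : Type*}

lemma incVec_union {X Y : Set α} (hXY : Disjoint X Y) :
    incVec (X ∪ Y) = incVec X + incVec Y :=
  indicator_union_of_disjoint hXY 1

lemma support_subset_ground_of_mem_basePolytope {M : Matroid α} {x : α → ℝ}
    (hx : x ∈ basePolytope M) : support x ⊆ M.E := by
  refine convexHull_min ?_ (convex_setOf_support_subset M.E) hx
  rintro _ ⟨B, hB, rfl⟩
  exact support_indicator_subset.trans hB.subset_ground

lemma basePolytope_nonempty (M : Matroid α) : (basePolytope M).Nonempty := by
  obtain ⟨B, hB⟩ := M.exists_isBase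
  exact ⟨incVec B, subset_convexHull ℝ _ ⟨B, hB, rfl⟩⟩

lemma basePolytope_eq_add_of_isBase_iff {M M₁ M₂ : Matroid α} (h : Disjoint M₁.E M₂.E)
    (hM : ∀ B, M.IsBase B ↔ ∃ X Y, M₁.IsBase X ∧ M₂.IsBase Y ∧ B = X ∪ Y) :
    basePolytope M = basePolytope M₁ + basePolytope M₂ := by
  rw [basePolytope, basePolytope, basePolytope, ← convexHull_add]
  congr 1
  ext x
  constructor
  · rintro ⟨B, hB, rfl⟩
    obtain ⟨X, Y, hX, hY, rfl⟩ := (hM B).1 hB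
    exact ⟨incVec X, ⟨X, hX, rfl⟩, incVec Y, ⟨Y, hY, rfl⟩,
      (incVec_union (h.mono hX.subset_ground hY.subset_ground)).symm⟩
  · rintro ⟨_, ⟨X, hX, rfl⟩, _, ⟨Y, hY, rfl⟩, rfl⟩
    exact ⟨X ∪ Y, (hM _).2 ⟨X, Y, hX, hY, rfl⟩,
      (incVec_union (h.mono hX.subset_ground hY.subset_ground)).symm⟩

end BasePolytope

lemma Matroid.disjointSum_isBase_iff_exists_union {α : Type*} {M₁ M₂ : Matroid α}
    {h : Disjoint M₁.E M₂.E} {B : Set α} :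
    (M₁.disjointSum M₂ h).IsBase B ↔ ∃ X Y, M₁.IsBase X ∧ M₂.IsBase Y ∧ B = X ∪ Y := by
  refine ⟨fun hB ↦ ?_, ?_⟩
  · obtain ⟨X, Y, hX, hY, -, rfl⟩ := hB.eq_union_image_of_disjointSum
    exact ⟨X, Y, hX, hY, rfl⟩
  · rintro ⟨X, Y, hX, hY, rfl⟩
    have hX₂ : Disjoint X M₂.E := h.mono_left hX.subset_ground
    have hY₁ : Disjoint Y M₁.E := h.symm.mono_left hY.subset_ground
    rw [disjointSum_isBase_iff, union_inter_distrib_right, union_inter_distrib_right,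
      inter_eq_self_of_subset_left hX.subset_ground, inter_eq_self_of_subset_left hY.subset_ground,
      hX₂.inter_eq, hY₁.inter_eq, union_empty, empty_union]
    exact ⟨hX, hY, union_subset_union hX.subset_ground hY.subset_ground⟩

theorem statement14_general {α : Type*} (M₁ M₂ : Matroid α)
    (h : Disjoint M₁.E M₂.E)
    (t : ℕ) (N : Fin t → Matroid α) (hNE : ∀ i, (N i).E = M₁.E)
    (hdec : basePolytope M₁ = ⋃ i, basePolytope (N i))
    (hproper : ∀ i, basePolytope (N i) ⊂ basePolytope M₁)
    (hface : ∀ i j, i ≠ j →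
      IsExtreme ℝ (basePolytope (N i)) (basePolytope (N i) ∩ basePolytope (N j)))
    (L : Fin t → Matroid α)
    (hL : ∀ i B, (L i).IsBase B ↔ ∃ X Y, (N i).IsBase X ∧ M₂.IsBase Y ∧ B = X ∪ Y) :
    basePolytope (M₁.disjointSum M₂ h) = ⋃ i, basePolytope (L i) ∧
    (∀ i, basePolytope (L i) ⊂ basePolytope (M₁.disjointSum M₂ h)) ∧
    ∀ i j, i ≠ j →
      IsExtreme ℝ (basePolytope (L i)) (basePolytope (L i) ∩ basePolytope (L j)) := by
  have hsum : basePolytope (M₁.disjointSum M₂ h) = basePolytope M₁ + basePolytope M₂ :=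
    basePolytope_eq_add_of_isBase_iff h fun _ ↦ disjointSum_isBase_iff_exists_union
  have hLsum (i) : basePolytope (L i) = basePolytope (N i) + basePolytope M₂ :=
    basePolytope_eq_add_of_isBase_iff (hNE i ▸ h) (hL i)
  have hsupp₁ : ∀ x ∈ basePolytope M₁, support x ⊆ M₁.E :=
    fun _ ↦ support_subset_ground_of_mem_basePolytope
  have hsuppN (i) : ∀ x ∈ basePolytope (N i), support x ⊆ M₁.E :=
    fun _ hx ↦ hNE i ▸ support_subset_ground_of_mem_basePolytope hx
  have hsupp₂ : ∀ x ∈ basePolytope M₂, support x ⊆ M₂.E :=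
    fun _ ↦ support_subset_ground_of_mem_basePolytope
  refine ⟨?_, fun i ↦ ?_, fun i j hij ↦ ?_⟩
  · simp only [hsum, hLsum, hdec, iUnion_add]
  · rw [hLsum, hsum]
    exact add_ssubset_add_of_support_subset h (hsuppN i) hsupp₁ hsupp₂ (hproper i)
      (basePolytope_nonempty M₂)
  · rw [hLsum, hLsum, add_inter_add_of_support_subset h (hsuppN i) (hsuppN j) hsupp₂]
    exact (hface i j hij).add_of_support_subset h (hsuppN i) hsupp₂

/-- a matroid base polytope decomposition `P(M₁) = P(N₁) ∪ ⋯ ∪ P(N_t)`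
induces the decomposition `P(M₁ ⊕ M₂) = P(L₁) ∪ ⋯ ∪ P(L_t)` with `Lᵢ = Nᵢ ⊕ M₂`. -/
theorem statement14 {α : Type*} (M₁ M₂ : Matroid α)
    (hfin₁ : M₁.E.Finite) (hfin₂ : M₂.E.Finite) (h : Disjoint M₁.E M₂.E)
    (t : ℕ) (ht : 2 ≤ t) (N : Fin t → Matroid α) (hNE : ∀ i, (N i).E = M₁.E)
    (hdec : basePolytope M₁ = ⋃ i, basePolytope (N i))
    (hproper : ∀ i, basePolytope (N i) ⊂ basePolytope M₁)
    (hface : ∀ i j, i ≠ j →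
      IsExtreme ℝ (basePolytope (N i)) (basePolytope (N i) ∩ basePolytope (N j)))
    (L : Fin t → Matroid α) (hLE : ∀ i, (L i).E = M₁.E ∪ M₂.E)
    (hL : ∀ i B, (L i).IsBase B ↔ ∃ X Y, (N i).IsBase X ∧ M₂.IsBase Y ∧ B = X ∪ Y) :
    basePolytope (M₁.disjointSum M₂ h) = ⋃ i, basePolytope (L i) ∧
    (∀ i, basePolytope (L i) ⊂ basePolytope (M₁.disjointSum M₂ h)) ∧
    ∀ i j, i ≠ j →
      IsExtreme ℝ (basePolytope (L i)) (basePolytope (L i) ∩ basePolytope (L j)) :=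
  statement14_general M₁ M₂ h t N hNE hdec hproper hface L hL
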